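/- arXiv:1508.02787 — 4 statements merged into one kernel-verified Lean document; each statement's English description precedes it below -/
import Mathlib

section
/- Let h > 0, β ≥ 0, c > 0, and let ω ∈ ℝ be irrational with ‖nω‖_ℤ ≥ c·e^{−βn} for all integers n ≥ 1. Let f : ℝ → ℝ be a 1-periodic function with zero mean ∫₀¹ f(θ)dθ = 0 that is analytic on the strip of width h. Then for every h' with 0 < h' and 2πh' < 2πh − β, there exist a 1-periodic function g : ℝ → ℝ analytic on the strip of width h' and a constant C > 0 depending only on c, β, h, h' such that g(θ + ω) − g(θ) = f(θ) for all θ ∈ ℝ and ‖g‖_{h'} ≤ C·‖f‖_h. -/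
open MeasureTheory Real

/-- Distance from a real number to the nearest integer. -/
noncomputable def distToInt (x : ℝ) : ℝ := |x - round x|

/-- The open horizontal strip `{z : |Im z| < h}` in the complex plane. -/
def strip (h : ℝ) : Set ℂ := {z : ℂ | |z.im| < h}

/-!
Write `e(z) = exp(2πiz)` and expand `f = ∑ aₙ e(nθ)`. Moving the contour of the coefficient
integral to `Im z = ∓σ/2π` (periodicity cancels the vertical sides) gives `|aₙ| ≤ ‖f‖_h e^{-σ|n|}`
for every `σ < 2πh`, while the Diophantine condition bounds the small divisors from below,
`|e(nω) - 1| = 2|sin πnω| ≥ 4‖nω‖_ℤ ≥ 4c e^{-β|n|}`. So `g = ∑_{n ≠ 0} aₙ / (e(nω) - 1) e(nθ)`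
converges geometrically on the strip of width `h'` once `2πh' + β < σ`, solves the equation term
by term, and is real because `a₋ₙ = conj aₙ`.
-/

open Complex (I)
open ComplexConjugate

noncomputable def fourierExp (n : ℤ) (z : ℂ) : ℂ := Complex.exp (2 * π * I * n * z)

lemma fourierExp_add (n : ℤ) (z w : ℂ) :
    fourierExp n (z + w) = fourierExp n z * fourierExp n w := by
  rw [fourierExp, fourierExp, fourierExp, ← Complex.exp_add]
  ring_nf

lemma fourierExp_add_one (n : ℤ) (z : ℂ) : fourierExp n (z + 1) = fourierExp n z := by
  have h1 : fourierExp n 1 = 1 := by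
    rw [fourierExp, mul_one, mul_comm, Complex.exp_int_mul_two_pi_mul_I]
  rw [fourierExp_add, h1, mul_one]

lemma fourierExp_zero (z : ℂ) : fourierExp 0 z = 1 := by
  simp [fourierExp]

lemma norm_fourierExp (n : ℤ) (z : ℂ) : ‖fourierExp n z‖ = exp (-(2 * π * n * z.im)) := by
  rw [fourierExp, Complex.norm_exp]
  simp [Complex.mul_re, Complex.mul_im]

lemma norm_fourierExp_le (n : ℤ) (z : ℂ) :
    ‖fourierExp n z‖ ≤ exp (2 * π * |(n : ℝ)| * |z.im|) := by
  rw [norm_fourierExp, exp_le_exp, mul_assoc _ |(n : ℝ)|, ← abs_mul, mul_assoc, ← mul_neg]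
  gcongr
  exact neg_le_abs _

lemma differentiable_fourierExp (n : ℤ) : Differentiable ℂ (fourierExp n) :=
  (differentiable_id.const_mul _).cexp

lemma conj_fourierExp_ofReal (n : ℤ) (x : ℝ) : conj (fourierExp n x) = fourierExp (-n) x := by
  rw [fourierExp, fourierExp, ← Complex.exp_conj]
  simp only [map_mul, map_ofNat, Complex.conj_ofReal, Complex.conj_I, map_intCast]
  push_cast
  ring_nf

lemma fourier_coe_eq_fourierExp (n : ℤ) (x : ℝ) :
    fourier n (x : UnitAddCircle) = fourierExp n x := by
  simp [fourierExp]

lemma norm_fourierExp_sub_one (n : ℤ) (x : ℝ) :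
    ‖fourierExp n x - 1‖ = 2 * |sin (π * (n * x))| := by
  have : fourierExp n x = Complex.exp (I * ↑(2 * π * (n * x))) := by
    rw [fourierExp]; push_cast; ring_nf
  rw [this, Complex.norm_exp_I_mul_ofReal_sub_one, norm_mul, Real.norm_eq_abs, Real.norm_eq_abs,
    abs_two]
  ring_nf

lemma two_mul_norm_le_abs_sin (x : ℝ) : 2 * ‖(x : UnitAddCircle)‖ ≤ |sin (π * x)| := by
  rw [UnitAddCircle.norm_eq]
  set d := x - round x
  have hd : |d| ≤ 1 / 2 := abs_sub_round x
  have hsin : |sin (π * x)| = |sin (π * d)| := by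
    rw [show π * x = π * d + round x * π by ring, sin_add_int_mul_pi, abs_mul, abs_neg_one_zpow,
      one_mul]
  have hπd : |π * d| = π * |d| := by rw [abs_mul, abs_of_pos pi_pos]
  rw [hsin, abs_sin_eq_sin_abs_of_abs_le_pi (by rw [hπd]; nlinarith [pi_pos]), hπd]
  calc 2 * |d| = 2 / π * (π * |d|) := by field_simp
    _ ≤ sin (π * |d|) := mul_le_sin (by positivity) (by nlinarith [pi_pos])

lemma distToInt_eq_norm (x : ℝ) : distToInt x = ‖(x : UnitAddCircle)‖ :=
  UnitAddCircle.norm_eq.symm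

lemma distToInt_abs_mul (a x : ℝ) : distToInt (|a| * x) = distToInt (a * x) := by
  rcases abs_choice a with ha | ha <;> rw [ha]
  rw [distToInt_eq_norm, distToInt_eq_norm, neg_mul, AddCircle.coe_neg, norm_neg]

lemma le_norm_fourierExp_sub_one {ω β c : ℝ}
    (hω : ∀ n : ℕ, 1 ≤ n → c * exp (-(β * n)) ≤ distToInt (n * ω)) {n : ℤ} (hn : n ≠ 0) :
    4 * c * exp (-β * |(n : ℝ)|) ≤ ‖fourierExp n ω - 1‖ := by
  have habs : |(n : ℝ)| = n.natAbs := by rw [Nat.cast_natAbs, Int.cast_abs]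
  calc 4 * c * exp (-β * |(n : ℝ)|)
      = 4 * (c * exp (-(β * n.natAbs))) := by rw [habs, neg_mul, mul_assoc]
    _ ≤ 4 * distToInt (n * ω) := by
      rw [← distToInt_abs_mul, habs]
      gcongr
      exact hω _ (Int.natAbs_pos.2 hn)
    _ ≤ 2 * |sin (π * (n * ω))| := by
      rw [distToInt_eq_norm]; linarith [two_mul_norm_le_abs_sin (n * ω)]
    _ = ‖fourierExp n ω - 1‖ := (norm_fourierExp_sub_one n ω).symm

lemma fourierExp_ne_one {ω β c : ℝ} (hc : 0 < c)
    (hω : ∀ n : ℕ, 1 ≤ n → c * exp (-(β * n)) ≤ distToInt (n * ω)) {n : ℤ} (hn : n ≠ 0) :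
    fourierExp n ω ≠ 1 := by
  intro h1
  have := le_norm_fourierExp_sub_one hω hn
  rw [h1, sub_self, norm_zero] at this
  exact (by positivity : (0 : ℝ) < 4 * c * exp (-β * |(n : ℝ)|)).not_ge this

lemma summable_exp_neg_mul_abs {κ : ℝ} (hκ : 0 < κ) :
    Summable fun n : ℤ => exp (-κ * |(n : ℝ)|) := by
  have hnat : Summable fun n : ℕ => exp (n * -κ) := Real.summable_exp_nat_mul_iff.2 (by linarith)
  refine summable_int_iff_summable_nat_and_neg.2 ⟨?_, ?_⟩ <;>
    refine hnat.congr fun n => ?_ <;> simp [mul_comm]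

lemma ofReal_mem_strip {h : ℝ} (hh : 0 < h) (x : ℝ) : (x : ℂ) ∈ strip h := by
  simpa [strip] using hh

lemma continuous_comp_ofReal {F : ℂ → ℂ} {h : ℝ} (hh : 0 < h)
    (hF : DifferentiableOn ℂ F (strip h)) : Continuous fun x : ℝ => F x :=
  hF.continuousOn.comp_continuous Complex.continuous_ofReal (ofReal_mem_strip hh)

lemma isOpen_strip (h : ℝ) : IsOpen (strip h) :=
  isOpen_lt (continuous_abs.comp Complex.continuous_im) continuous_const

lemma mem_strip_of_im_mem_uIcc {h t : ℝ} (ht : |t| < h) {z : ℂ} (hz : z.im ∈ Set.uIcc 0 t) :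
    z ∈ strip h := by
  have := Set.abs_sub_left_of_mem_uIcc hz
  rw [sub_zero, sub_zero] at this
  exact this.trans_lt ht

lemma integral_eq_integral_add_mul_I {Φ : ℂ → ℂ} {h t : ℝ} (hΦ : DifferentiableOn ℂ Φ (strip h))
    (hper : ∀ z ∈ strip h, Φ (z + 1) = Φ z) (ht : |t| < h) :
    ∫ x in (0 : ℝ)..1, Φ x = ∫ x in (0 : ℝ)..1, Φ (x + t * I) := by
  have hrect := Complex.integral_boundary_rect_eq_zero_of_differentiableOn Φ 0 (1 + t * I)
    (hΦ.mono fun z hz => mem_strip_of_im_mem_uIcc ht (by simpa using hz.2))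
  -- the vertical sides of the rectangle cancel by periodicity
  have hsides : ∫ y in (0 : ℝ)..t, Φ (1 + y * I) = ∫ y in (0 : ℝ)..t, Φ (y * I) :=
    intervalIntegral.integral_congr fun y hy => by
      rw [add_comm, hper _ (mem_strip_of_im_mem_uIcc ht (by simpa using hy))]
  simp only [Complex.zero_re, Complex.zero_im, Complex.add_re, Complex.add_im, Complex.one_re,
    Complex.one_im, Complex.mul_re, Complex.mul_im, Complex.ofReal_re, Complex.ofReal_im,
    Complex.I_re, Complex.I_im, mul_zero, mul_one, sub_zero, zero_add, add_zero,
    Complex.ofReal_zero, Complex.ofReal_one, zero_mul, hsides] at hrect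
  simpa [sub_eq_zero] using hrect

lemma norm_integral_fourierExp_mul_le {F : ℂ → ℂ} {h M σ : ℝ}
    (hF : DifferentiableOn ℂ F (strip h)) (hper : ∀ z ∈ strip h, F (z + 1) = F z)
    (hM : ∀ z ∈ strip h, ‖F z‖ ≤ M) (hσ : 0 ≤ σ) (hσh : σ < 2 * π * h) (n : ℤ) :
    ‖∫ x in (0 : ℝ)..1, fourierExp (-n) x * F x‖ ≤ M * exp (-σ * |(n : ℝ)|) := by
  -- shift towards the side of the strip on which `e(-nz)` is small
  obtain ⟨t, ht, hnt⟩ : ∃ t : ℝ, |t| < h ∧ 2 * π * n * t = -(σ * |(n : ℝ)|) := by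
    have hρ : σ / (2 * π) < h := by rwa [div_lt_iff₀ (by positivity), mul_comm]
    rcases le_total 0 (n : ℝ) with hn | hn
    · refine ⟨-(σ / (2 * π)), by rwa [abs_neg, abs_of_nonneg (by positivity)], ?_⟩
      rw [abs_of_nonneg hn]; field_simp
    · refine ⟨σ / (2 * π), by rwa [abs_of_nonneg (by positivity)], ?_⟩
      rw [abs_of_nonpos hn]; field_simp
  rw [integral_eq_integral_add_mul_I (Φ := fun z => fourierExp (-n) z * F z)
    ((differentiable_fourierExp _).differentiableOn.mul hF)
    (fun z hz => by simp only [fourierExp_add_one, hper z hz]) ht]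
  refine (intervalIntegral.norm_integral_le_of_norm_le_const (C := M * exp (-σ * |(n : ℝ)|))
    fun x _ => ?_).trans_eq (by simp)
  have hz : (x : ℂ) + t * I ∈ strip h := by simpa [strip] using ht
  rw [norm_mul, norm_fourierExp, mul_comm]
  simp only [Complex.add_im, Complex.ofReal_im, Complex.mul_im, Complex.ofReal_re, Complex.I_im,
    Complex.I_re, mul_one, mul_zero, zero_add, add_zero, Int.cast_neg]
  rw [show -(2 * π * -(n : ℝ) * t) = -(σ * |(n : ℝ)|) by rw [← hnt]; ring, ← neg_mul]
  exact mul_le_mul_of_nonneg_right (hM _ hz) (exp_pos _).le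

noncomputable def fourierCoeffUnit (f : ℝ → ℂ) (n : ℤ) : ℂ :=
  ∫ x in (0 : ℝ)..1, fourierExp (-n) x * f x

lemma fourierCoeffUnit_zero (f : ℝ → ℝ) :
    fourierCoeffUnit (fun x => f x) 0 = ↑(∫ x in (0 : ℝ)..1, f x) := by
  simp [fourierCoeffUnit, fourierExp_zero, intervalIntegral.integral_ofReal]

lemma conj_fourierCoeffUnit (f : ℝ → ℝ) (n : ℤ) :
    conj (fourierCoeffUnit (fun x => f x) n) = fourierCoeffUnit (fun x => f x) (-n) := by
  rw [fourierCoeffUnit, fourierCoeffUnit, intervalIntegral.integral_of_le zero_le_one,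
    intervalIntegral.integral_of_le zero_le_one, ← integral_conj]
  simp [conj_fourierExp_ofReal]

lemma hasSum_fourierCoeffUnit_mul_fourierExp {f : ℝ → ℂ} (hf : Continuous f)
    (hper : Function.Periodic f 1) (hs : Summable (fourierCoeffUnit f)) (x : ℝ) :
    HasSum (fun n => fourierCoeffUnit f n * fourierExp n x) (f x) := by
  let L : C(UnitAddCircle, ℂ) := ⟨hper.lift, hf.quotient_liftOn' _⟩
  have hL : fourierCoeff L = fourierCoeffUnit f := by
    ext n
    rw [fourierCoeff_eq_intervalIntegral L n 0, zero_add, div_one, one_smul]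
    simp only [fourier_coe_eq_fourierExp, smul_eq_mul]
    rfl
  have := has_pointwise_sum_fourier_series_of_summable (hL ▸ hs) (x : UnitAddCircle)
  simp only [hL, fourier_coe_eq_fourierExp, smul_eq_mul] at this
  exact this

noncomputable def trigSeries (b : ℤ → ℂ) (z : ℂ) : ℂ := ∑' n, b n * fourierExp n z

lemma trigSeries_add_one (b : ℤ → ℂ) (z : ℂ) : trigSeries b (z + 1) = trigSeries b z := by
  simp only [trigSeries, fourierExp_add_one]

lemma ofReal_re_trigSeries {b : ℤ → ℂ} (hb : ∀ n, conj (b n) = b (-n)) (x : ℝ) :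
    ((trigSeries b x).re : ℂ) = trigSeries b x := by
  rw [← Complex.conj_eq_iff_re, trigSeries, Complex.conj_tsum, ← (Equiv.neg ℤ).tsum_eq]
  simp [hb, conj_fourierExp_ofReal]

section DecayingCoefficients

variable {b : ℤ → ℂ} {K κ r : ℝ}

lemma norm_mul_fourierExp_le (hb : ∀ n, ‖b n‖ ≤ K * exp (-(κ + 2 * π * r) * |(n : ℝ)|)) (n : ℤ)
    {z : ℂ} (hz : z ∈ strip r) : ‖b n * fourierExp n z‖ ≤ K * exp (-κ * |(n : ℝ)|) := by
  have hz' : |z.im| ≤ r := le_of_lt hz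
  calc ‖b n * fourierExp n z‖
      ≤ K * exp (-(κ + 2 * π * r) * |(n : ℝ)|) * exp (2 * π * |(n : ℝ)| * r) := by
        rw [norm_mul]
        refine mul_le_mul (hb n) ((norm_fourierExp_le n z).trans ?_) (norm_nonneg _)
          ((norm_nonneg _).trans (hb n))
        gcongr
    _ = K * exp (-κ * |(n : ℝ)|) := by
        rw [mul_assoc, ← exp_add]; ring_nf

lemma summable_mul_fourierExp (hb : ∀ n, ‖b n‖ ≤ K * exp (-(κ + 2 * π * r) * |(n : ℝ)|))
    (hκ : 0 < κ) {z : ℂ} (hz : z ∈ strip r) : Summable fun n => b n * fourierExp n z :=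
  ((summable_exp_neg_mul_abs hκ).mul_left K).of_norm_bounded fun n => norm_mul_fourierExp_le hb n hz

lemma differentiableOn_trigSeries (hb : ∀ n, ‖b n‖ ≤ K * exp (-(κ + 2 * π * r) * |(n : ℝ)|))
    (hκ : 0 < κ) : DifferentiableOn ℂ (trigSeries b) (strip r) :=
  Complex.differentiableOn_tsum_of_summable_norm ((summable_exp_neg_mul_abs hκ).mul_left K)
    (fun n => ((differentiable_fourierExp n).const_mul (b n)).differentiableOn) (isOpen_strip r)
    fun n _ hz => norm_mul_fourierExp_le hb n hz

lemma norm_trigSeries_le (hb : ∀ n, ‖b n‖ ≤ K * exp (-(κ + 2 * π * r) * |(n : ℝ)|))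
    (hκ : 0 < κ) {z : ℂ} (hz : z ∈ strip r) :
    ‖trigSeries b z‖ ≤ K * ∑' n : ℤ, exp (-κ * |(n : ℝ)|) := by
  rw [← tsum_mul_left]
  exact tsum_of_norm_bounded ((summable_exp_neg_mul_abs hκ).mul_left K).hasSum
    fun n => norm_mul_fourierExp_le hb n hz

end DecayingCoefficients

/-- For `n = 0` the denominator vanishes and `x / 0 = 0` makes the zero mode vanish. -/
noncomputable def cohomCoeff (ω : ℝ) (f : ℝ → ℂ) (n : ℤ) : ℂ :=
  fourierCoeffUnit f n / (fourierExp n ω - 1)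

lemma conj_cohomCoeff (ω : ℝ) (f : ℝ → ℝ) (n : ℤ) :
    conj (cohomCoeff ω (fun x => f x) n) = cohomCoeff ω (fun x => f x) (-n) := by
  rw [cohomCoeff, cohomCoeff, map_div₀, map_sub, map_one, conj_fourierCoeffUnit,
    conj_fourierExp_ofReal]

lemma cohomCoeff_mul_fourierExp_sub_one {ω : ℝ} {f : ℝ → ℂ} (hmean : fourierCoeffUnit f 0 = 0)
    (hω : ∀ n ≠ 0, fourierExp n ω ≠ 1) (n : ℤ) :
    cohomCoeff ω f n * (fourierExp n ω - 1) = fourierCoeffUnit f n := by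
  rcases eq_or_ne n 0 with rfl | hn
  · simp [cohomCoeff, hmean]
  · exact div_mul_cancel₀ _ (sub_ne_zero.2 (hω n hn))

lemma norm_cohomCoeff_le {ω β c M σ : ℝ} {f : ℝ → ℂ} (hc : 0 < c) (hM : 0 ≤ M)
    (hω : ∀ n : ℕ, 1 ≤ n → c * exp (-(β * n)) ≤ distToInt (n * ω))
    (hf : ∀ n, ‖fourierCoeffUnit f n‖ ≤ M * exp (-(σ + β) * |(n : ℝ)|)) (n : ℤ) :
    ‖cohomCoeff ω f n‖ ≤ M / (4 * c) * exp (-σ * |(n : ℝ)|) := by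
  rcases eq_or_ne n 0 with rfl | hn
  · simp only [cohomCoeff, fourierExp_zero, sub_self, div_zero, norm_zero]
    positivity
  calc ‖cohomCoeff ω f n‖
      ≤ M * exp (-(σ + β) * |(n : ℝ)|) / (4 * c * exp (-β * |(n : ℝ)|)) := by
        rw [cohomCoeff, norm_div]
        exact div_le_div₀ (by positivity) (hf n) (by positivity) (le_norm_fourierExp_sub_one hω hn)
    _ = M / (4 * c) * exp (-σ * |(n : ℝ)|) := by
        rw [mul_div_mul_comm, ← exp_sub]; ring_nf

lemma trigSeries_cohomCoeff_add_sub {ω : ℝ} {f : ℝ → ℂ} (hf : Continuous f)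
    (hper : Function.Periodic f 1) (hs : Summable (fourierCoeffUnit f))
    (hmean : fourierCoeffUnit f 0 = 0) (hω : ∀ n ≠ 0, fourierExp n ω ≠ 1)
    (hsum : ∀ x : ℝ, Summable fun n => cohomCoeff ω f n * fourierExp n x) (θ : ℝ) :
    trigSeries (cohomCoeff ω f) (θ + ω) - trigSeries (cohomCoeff ω f) θ = f θ := by
  have hsum' := hsum (θ + ω)
  push_cast at hsum'
  rw [trigSeries, trigSeries, ← hsum'.tsum_sub (hsum θ)]
  refine ((hasSum_fourierCoeffUnit_mul_fourierExp hf hper hs θ).congr_fun fun n => ?_).tsum_eq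
  rw [fourierExp_add, ← cohomCoeff_mul_fourierExp_sub_one hmean hω n]
  ring

/-- Solution of the cohomological equation `g(θ+ω) - g(θ) = f(θ)` for a zero-mean 1-periodic
function `f` analytic on the strip of width `h`, when `‖nω‖_ℤ ≥ c e^{-βn}` for all `n ≥ 1`:
for every `0 < h'` with `2πh' < 2πh - β` there is a solution `g`, 1-periodic and analytic on
the strip of width `h'`, with `‖g‖_{h'} ≤ C ‖f‖_h` where `C = C(c,β,h,h') > 0`. -/
theorem statement4 (h β c h' : ℝ) (hh : 0 < h) (hβ : 0 ≤ β) (hc : 0 < c) (hh' : 0 < h')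
    (hwidth : 2 * π * h' < 2 * π * h - β) :
    ∃ C > 0, ∀ ω : ℝ, Irrational ω →
      (∀ n : ℕ, 1 ≤ n → c * Real.exp (-(β * n)) ≤ distToInt (n * ω)) →
      ∀ (f : ℝ → ℝ) (F : ℂ → ℂ) (M : ℝ),
        (∀ x : ℝ, f (x + 1) = f x) →
        (∫ θ in (0:ℝ)..1, f θ) = 0 →
        DifferentiableOn ℂ F (strip h) →
        (∀ z ∈ strip h, F (z + 1) = F z) →
        (∀ x : ℝ, F (x : ℂ) = (f x : ℂ)) →
        (∀ z ∈ strip h, ‖F z‖ ≤ M) →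
        ∃ (g : ℝ → ℝ) (G : ℂ → ℂ),
          (∀ x : ℝ, g (x + 1) = g x) ∧
          DifferentiableOn ℂ G (strip h') ∧
          (∀ z ∈ strip h', G (z + 1) = G z) ∧
          (∀ x : ℝ, G (x : ℂ) = (g x : ℂ)) ∧
          (∀ θ : ℝ, g (θ + ω) - g θ = f θ) ∧
          (∀ z ∈ strip h', ‖G z‖ ≤ C * M) := by
  -- the coefficients of `f` decay at rate `κ + 2πh' + β`, leaving the margin `κ` after the
  -- small divisors and the growth of `e(nz)` on the strip of width `h'` are paid for
  obtain ⟨κ, hκ, hκh⟩ : ∃ κ > 0, κ + 2 * π * h' + β < 2 * π * h :=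
    ⟨(2 * π * h - β - 2 * π * h') / 2, by linarith, by linarith⟩
  refine ⟨(4 * c)⁻¹ * ∑' n : ℤ, exp (-κ * |(n : ℝ)|), mul_pos (by positivity)
    ((summable_exp_neg_mul_abs hκ).tsum_pos (fun _ => (exp_pos _).le) 0 (exp_pos _)), ?_⟩
  intro ω _ hdioph f F M hper hmean hF hFper hFf hFM
  have hM : 0 ≤ M := (norm_nonneg _).trans (hFM 0 (ofReal_mem_strip hh 0))
  have ha (n : ℤ) :
      ‖fourierCoeffUnit (fun x => f x) n‖ ≤ M * exp (-(κ + 2 * π * h' + β) * |(n : ℝ)|) := by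
    simpa only [fourierCoeffUnit, hFf] using
      norm_integral_fourierExp_mul_le hF hFper hFM (by positivity) hκh n
  have hb := norm_cohomCoeff_le hc hM hdioph ha
  have hsol := trigSeries_cohomCoeff_add_sub (ω := ω)
    (by simpa only [hFf] using continuous_comp_ofReal hh hF) (fun x => by simp only [hper])
    (((summable_exp_neg_mul_abs (by positivity)).mul_left M).of_norm_bounded ha)
    (by rw [fourierCoeffUnit_zero, hmean, Complex.ofReal_zero])
    (fun _ => fourierExp_ne_one hc hdioph)
    (fun x => summable_mul_fourierExp hb hκ (ofReal_mem_strip hh' x))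
  refine ⟨fun x => (trigSeries (cohomCoeff ω fun x => f x) x).re,
    trigSeries (cohomCoeff ω fun x => f x), fun x => ?_, differentiableOn_trigSeries hb hκ,
    fun z _ => trigSeries_add_one _ z, fun x => (ofReal_re_trigSeries (conj_cohomCoeff ω f) x).symm,
    fun θ => by simpa using congrArg Complex.re (hsol θ),
    fun z hz => (norm_trigSeries_le hb hκ hz).trans_eq (by ring)⟩
  simp only [Complex.ofReal_add, Complex.ofReal_one, trigSeries_add_one]
end

section
/- Let K, ω, k̂ ∈ ℝ and let f, g, h : ℝ → ℝ be functions satisfying, for all θ ∈ ℝ: g(θ+ω) − g(θ) = f(θ+ω) and h(θ+ω) − h(θ) = k̂ − k(θ), where k(θ) = −exp(−K·(g(θ−ω) + g(θ))). Define V(θ) = exp(K·f(θ+ω)) + exp(−K·f(θ)), A(θ) = [[V(θ), −1], [1, 0]], and C(θ) = [[1, h(θ)], [0, 1]] · [[0, exp(−K·g(θ−ω))], [−exp(K·g(θ−ω)), exp(K·g(θ))]]. Then for every θ ∈ ℝ: det C(θ) = 1 (so C(θ) ∈ SL(2,ℝ)) and C(θ+ω)·A(θ) = [[1, k̂], [0,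 1]]·C(θ); equivalently C(θ+ω)·A(θ)·C(θ)⁻¹ = [[1, k̂], [0, 1]]. -/
open Real

/-- The potential `V(θ) = exp(K f(θ+ω)) + exp(-K f(θ))`. -/
noncomputable def pot (f : ℝ → ℝ) (K ω θ : ℝ) : ℝ :=
  Real.exp (K * f (θ + ω)) + Real.exp (-(K * f θ))

/-- The matrix `A(θ,0) = [[V(θ), -1], [1, 0]]`. -/
noncomputable def Amat (f : ℝ → ℝ) (K ω θ : ℝ) : Matrix (Fin 2) (Fin 2) ℝ :=
  !![pot f K ω θ, -1; 1, 0]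

/-- The conjugating matrix
`C(θ) = [[1, h(θ)],[0,1]] ⬝ [[0, e^{-K g(θ-ω)}],[-e^{K g(θ-ω)}, e^{K g(θ)}]]`. -/
noncomputable def Cmat (K ω : ℝ) (g h : ℝ → ℝ) (θ : ℝ) : Matrix (Fin 2) (Fin 2) ℝ :=
  !![1, h θ; 0, 1] *
    !![0, Real.exp (-(K * g (θ - ω))); -Real.exp (K * g (θ - ω)), Real.exp (K * g θ)]

/-- If `g` solves `g(θ+ω) - g(θ) = f(θ+ω)` and `h` solves `h(θ+ω) - h(θ) = k̂ - k(θ)` with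
`k(θ) = -exp(-K(g(θ-ω)+g(θ)))`, then for every `θ`: `det C(θ) = 1`,
`C(θ+ω) A(θ) = [[1,k̂],[0,1]] C(θ)`, and `C(θ+ω) A(θ) C(θ)⁻¹ = [[1,k̂],[0,1]]`. -/
theorem statement6 (K ω khat : ℝ) (f g h : ℝ → ℝ)
    (hg : ∀ θ : ℝ, g (θ + ω) - g θ = f (θ + ω))
    (hh : ∀ θ : ℝ, h (θ + ω) - h θ = khat - (-Real.exp (-(K * (g (θ - ω) + g θ))))) :
    ∀ θ : ℝ,
      (Cmat K ω g h θ).det = 1 ∧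
      Cmat K ω g h (θ + ω) * Amat f K ω θ = !![1, khat; 0, 1] * Cmat K ω g h θ ∧
      Cmat K ω g h (θ + ω) * Amat f K ω θ * (Cmat K ω g h θ)⁻¹ = !![1, khat; 0, 1] := by
  intro θ
  have hdet : (Cmat K ω g h θ).det = 1 := by
    simp [Cmat, Matrix.det_mul, Matrix.det_fin_two_of, Real.exp_neg]
    field_simp
    ring
  have hfθ : f θ = g θ - g (θ - ω) := by
    have := hg (θ - ω); simp at this; linarith
  have hfω : f (θ + ω) = g (θ + ω) - g θ := (hg θ).symm
  have hhω : h (θ + ω) = h θ + khat + Real.exp (-(K * (g (θ - ω) + g θ))) := by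
    have := hh θ; linarith
  have key : Cmat K ω g h (θ + ω) * Amat f K ω θ = !![1, khat; 0, 1] * Cmat K ω g h θ := by
    ext i j
    fin_cases i <;> fin_cases j <;>
      simp [Cmat, Amat, pot, Matrix.mul_apply, Fin.sum_univ_two, hfθ, hfω, hhω,
        add_sub_cancel_right, mul_sub, mul_add, neg_add, neg_sub, Real.exp_add, Real.exp_sub,
        Real.exp_neg] <;>
      field_simp <;> ring
  refine ⟨hdet, key, ?_⟩
  rw [key, Matrix.mul_nonsing_inv_cancel_right]
  rw [hdet]; exact isUnit_one
end

section
/- Let f : ℝ → ℝ be 1-periodic and continuously differentiable with max(sup|f|, sup|f'|) ≤ 1, let K ≥ 1, and let ω ∈ ℝ be irrational with β(ω) > 40K. Then for every θ ∈ ℝ and every E ∈ ℝ with |E| ≤ 4·e^{K}, there is no nonzero u ∈ ℓ²(ℤ) satisfying −u_{n+1} − u_{n−1} + V(θ + nω)·u_n = E·u_n for all n ∈ ℤ. In particular, the operator H_{K,θ,ω} has no eigenvalues in [−4e^{K}, 4e^{K}]. -/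
open Real Filter

/-- `β(ω) = limsup_{n→∞} (-log ‖nω‖_ℤ)/n ∈ [0,∞]`, with the convention `-log 0 = +∞`. -/
noncomputable def betaExp (ω : ℝ) : EReal :=
  Filter.limsup
    (fun n : ℕ => if distToInt (n * ω) = 0 then (⊤ : EReal)
      else ((-Real.log (distToInt (n * ω)) / n : ℝ) : EReal)) atTop

/-!
Writing the eigenvalue equation with the transfer matrices `A n = !![V n - E, -1; 1, 0] ∈ SL(2)`,
the vectors `x n = (u n, u (n - 1))` satisfy `x (n + 1) = A n x n`. The condition `β(ω) > 40K`
gives infinitely many `q` with `‖qω‖ ≤ e^{-40Kq}`; as `V` is 1-periodic and `2Ke^K`-Lipschitz,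
it is then almost `q`-periodic along the orbit, and the `q`-step transfer matrices of three
consecutive blocks `[n - q, n)`, `[n, n + q)`, `[n + q, n + 2q)` differ by at most
`q e^{3Kq} · 2Ke^K e^{-40Kq} ≤ 1/4`. Gordon's argument: for `T` in `SL(2)`, `T⁻¹ = (tr T) - T`,
so `x n` is recovered from `x (n + q), x (n + 2q)` when `|tr T| ≤ 1` and from `x (n - q), x (n + q)`
otherwise. Hence `‖x n‖ ≤ 2 (‖x (n - q)‖ + ‖x (n + q)‖ + ‖x (n + 2q)‖)` for all these `q`, and the
decay of `u ∈ ℓ²` forces `x n = 0`.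
-/

open Topology Matrix

-- Matrices carry the `ℓ∞` operator norm, the one compatible with the sup norm on `Fin 2 → 𝕜`.
attribute [local instance] Matrix.linftyOpNormedRing

namespace Matrix

variable {𝕜 : Type*} [NormedField 𝕜]

theorem linfty_opNorm_fin_two (X : Matrix (Fin 2) (Fin 2) 𝕜) :
    ‖X‖ = max (‖X 0 0‖ + ‖X 0 1‖) (‖X 1 0‖ + ‖X 1 1‖) := by
  rw [linfty_opNorm_def, Fin.univ_succ, Finset.sup_cons]
  simp

theorem linfty_opNorm_adjugate_fin_two_le (X : Matrix (Fin 2) (Fin 2) 𝕜) :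
    ‖adjugate X‖ ≤ 2 * ‖X‖ := by
  rw [adjugate_fin_two, linfty_opNorm_fin_two, linfty_opNorm_fin_two]
  simp only [of_apply, cons_val', cons_val_zero, cons_val_one, empty_val', cons_val_fin_one,
    norm_neg]
  have h₀ := le_max_left (‖X 0 0‖ + ‖X 0 1‖) (‖X 1 0‖ + ‖X 1 1‖)
  have h₁ := le_max_right (‖X 0 0‖ + ‖X 0 1‖) (‖X 1 0‖ + ‖X 1 1‖)
  refine max_le ?_ ?_ <;>
    linarith [norm_nonneg (X 0 0), norm_nonneg (X 0 1), norm_nonneg (X 1 0), norm_nonneg (X 1 1)]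

theorem adjugate_fin_two_eq_trace_smul_sub (X : Matrix (Fin 2) (Fin 2) 𝕜) :
    adjugate X = X.trace • 1 - X := by
  ext i j
  fin_cases i <;> fin_cases j <;> simp [adjugate_fin_two, trace_fin_two]

theorem adjugate_fin_two_sub (X Y : Matrix (Fin 2) (Fin 2) 𝕜) :
    adjugate (X - Y) = adjugate X - adjugate Y := by
  simp only [adjugate_fin_two_eq_trace_smul_sub, trace_sub, sub_smul]
  abel

theorem eq_adjugate_mulVec_of_det_eq_one {X : Matrix (Fin 2) (Fin 2) 𝕜} (hX : X.det = 1)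
    (x : Fin 2 → 𝕜) : x = adjugate X *ᵥ (X *ᵥ x) := by
  rw [mulVec_mulVec, adjugate_mul, hX, one_smul, one_mulVec]

theorem gordon_norm_le {T T' T'' : Matrix (Fin 2) (Fin 2) 𝕜} (hT : T.det = 1)
    (hT'' : T''.det = 1) (hT'T : ‖T' - T‖ ≤ 1 / 4) (hT''T : ‖T'' - T‖ ≤ 1 / 4)
    {x₀ x₁ x₂ x₃ : Fin 2 → 𝕜} (h₀ : T'' *ᵥ x₀ = x₁) (h₁ : T *ᵥ x₁ = x₂) (h₂ : T' *ᵥ x₂ = x₃) :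
    ‖x₁‖ ≤ 2 * (‖x₀‖ + ‖x₂‖ + ‖x₃‖) := by
  rcases le_total ‖T.trace‖ 1 with htr | htr
  · have hx₁ : x₁ = T.trace • x₂ - x₃ + (T' - T) *ᵥ x₂ := by
      rw [eq_adjugate_mulVec_of_det_eq_one hT x₁, h₁, adjugate_fin_two_eq_trace_smul_sub,
        ← h₂, sub_mulVec, sub_mulVec, smul_mulVec, one_mulVec]
      abel
    have hD : ‖(T' - T) *ᵥ x₂‖ ≤ 1 / 4 * ‖x₂‖ :=
      (linfty_opNorm_mulVec _ _).trans (by gcongr)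
    calc ‖x₁‖ ≤ ‖T.trace • x₂‖ + ‖x₃‖ + ‖(T' - T) *ᵥ x₂‖ := by
          rw [hx₁]; exact (norm_add_le _ _).trans (by gcongr; exact norm_sub_le _ _)
      _ ≤ 1 * ‖x₂‖ + ‖x₃‖ + 1 / 4 * ‖x₂‖ := by
          rw [norm_smul]; gcongr
      _ ≤ 2 * (‖x₀‖ + ‖x₂‖ + ‖x₃‖) := by linarith [norm_nonneg x₀, norm_nonneg x₂, norm_nonneg x₃]
  · have hx₁ : T.trace • x₁ = x₀ + x₂ - adjugate (T'' - T) *ᵥ x₁ := by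
      rw [eq_adjugate_mulVec_of_det_eq_one hT'' x₀, h₀, adjugate_fin_two_sub, sub_mulVec,
        ← h₁, adjugate_fin_two_eq_trace_smul_sub T, sub_mulVec, smul_mulVec, one_mulVec]
      abel
    have hD : ‖adjugate (T'' - T) *ᵥ x₁‖ ≤ 1 / 2 * ‖x₁‖ :=
      (linfty_opNorm_mulVec _ _).trans <| by
        gcongr; linarith [linfty_opNorm_adjugate_fin_two_le (T'' - T)]
    have : ‖x₁‖ ≤ ‖x₀‖ + ‖x₂‖ + 1 / 2 * ‖x₁‖ := calc
      ‖x₁‖ ≤ ‖T.trace‖ * ‖x₁‖ := le_mul_of_one_le_left (norm_nonneg _) htr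
      _ = ‖x₀ + x₂ - adjugate (T'' - T) *ᵥ x₁‖ := by rw [← norm_smul, hx₁]
      _ ≤ ‖x₀‖ + ‖x₂‖ + 1 / 2 * ‖x₁‖ :=
          (norm_sub_le _ _).trans (add_le_add (norm_add_le _ _) hD)
    linarith [norm_nonneg x₃]

end Matrix

def orderedProd {R : Type*} [Monoid R] (g : ℕ → R) : ℕ → R
  | 0 => 1
  | k + 1 => g k * orderedProd g k

section orderedProd

theorem orderedProd_mulVec {𝕜 : Type*} [CommRing 𝕜] {g : ℕ → Matrix (Fin 2) (Fin 2) 𝕜}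
    {x : ℕ → Fin 2 → 𝕜} (hx : ∀ j, g j *ᵥ x j = x (j + 1)) :
    ∀ k, orderedProd g k *ᵥ x 0 = x k
  | 0 => by simp [orderedProd]
  | k + 1 => by rw [orderedProd, ← Matrix.mulVec_mulVec, orderedProd_mulVec hx k, hx]

theorem det_orderedProd {𝕜 : Type*} [CommRing 𝕜] {g : ℕ → Matrix (Fin 2) (Fin 2) 𝕜}
    (hg : ∀ j, (g j).det = 1) : ∀ k, (orderedProd g k).det = 1
  | 0 => by simp [orderedProd]
  | k + 1 => by rw [orderedProd, Matrix.det_mul, hg, det_orderedProd hg k, one_mul]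

variable {R : Type*} [NormedRing R] [NormOneClass R] {M : ℝ}

theorem norm_orderedProd_le {g : ℕ → R} (hg : ∀ j, ‖g j‖ ≤ M) :
    ∀ k, ‖orderedProd g k‖ ≤ M ^ k
  | 0 => by simp [orderedProd]
  | k + 1 => calc
      ‖g k * orderedProd g k‖ ≤ ‖g k‖ * ‖orderedProd g k‖ := norm_mul_le _ _
      _ ≤ M * M ^ k := by gcongr; exacts [(norm_nonneg _).trans (hg k), hg k,
          norm_orderedProd_le hg k]
      _ = M ^ (k + 1) := by ring

theorem norm_orderedProd_sub_le {g h : ℕ → R} {δ : ℝ} (hM : 1 ≤ M) (hg : ∀ j, ‖g j‖ ≤ M)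
    (hh : ∀ j, ‖h j‖ ≤ M) (hgh : ∀ j, ‖g j - h j‖ ≤ δ) :
    ∀ k, ‖orderedProd g k - orderedProd h k‖ ≤ k * M ^ k * δ
  | 0 => by simp [orderedProd]
  | k + 1 => by
    have hδ : 0 ≤ δ := (norm_nonneg _).trans (hgh 0)
    have ih := norm_orderedProd_sub_le hM hg hh hgh k
    have hMk : M ^ k ≤ M ^ (k + 1) := pow_le_pow_right₀ hM k.le_succ
    calc ‖g k * orderedProd g k - h k * orderedProd h k‖
        = ‖g k * (orderedProd g k - orderedProd h k) + (g k - h k) * orderedProd h k‖ := by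
          noncomm_ring
      _ ≤ ‖g k‖ * ‖orderedProd g k - orderedProd h k‖ + ‖g k - h k‖ * ‖orderedProd h k‖ :=
          (norm_add_le _ _).trans (add_le_add (norm_mul_le _ _) (norm_mul_le _ _))
      _ ≤ M * (k * M ^ k * δ) + δ * M ^ k :=
          add_le_add (mul_le_mul (hg k) ih (norm_nonneg _) (zero_le_one.trans hM))
            (mul_le_mul (hgh k) (norm_orderedProd_le hh k) (norm_nonneg _) hδ)
      _ ≤ (k + 1 : ℕ) * M ^ (k + 1) * δ := by
          rw [pow_succ'] at hMk ⊢
          push_cast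
          nlinarith [mul_le_mul_of_nonneg_left hMk hδ]

end orderedProd

section Gordon

variable {𝕜 : Type*} [NormedField 𝕜] {A : ℤ → Matrix (Fin 2) (Fin 2) 𝕜} {x : ℤ → Fin 2 → 𝕜}

theorem orderedProd_comp_add_mulVec (hx : ∀ n, A n *ᵥ x n = x (n + 1)) (m : ℤ) (k : ℕ) :
    orderedProd (fun j => A (m + j)) k *ᵥ x m = x (m + k) := by
  simpa using orderedProd_mulVec (x := fun j => x (m + j))
    (fun j => by simpa [add_assoc] using hx (m + j)) k

theorem norm_orderedProd_shift_sub_le {M : ℝ} (hM : 1 ≤ M) (hA : ∀ n, ‖A n‖ ≤ M) {q : ℕ}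
    (hq : ∀ n, ‖A (n + q) - A n‖ ≤ (4 * q * M ^ q)⁻¹) (m : ℤ) :
    ‖orderedProd (fun j => A (m + q + j)) q - orderedProd (fun j => A (m + j)) q‖ ≤ 1 / 4 := by
  have hq4 : (q * M ^ q : ℝ) * (4 * q * M ^ q)⁻¹ ≤ 1 / 4 := calc
    (q * M ^ q : ℝ) * (4 * q * M ^ q)⁻¹ = 4⁻¹ * ((q * M ^ q) * (q * M ^ q)⁻¹) := by
      rw [show (4 * q * M ^ q : ℝ) = 4 * (q * M ^ q) by ring, mul_inv]; ring
    _ ≤ 1 / 4 := by rw [one_div]; exact mul_le_of_le_one_right (by norm_num) mul_inv_le_one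
  refine (norm_orderedProd_sub_le hM (fun j => hA _) (fun j => hA _) (fun j => ?_) q).trans hq4
  simpa [add_right_comm] using hq (m + j)

theorem eq_zero_of_frequently_almost_periodic {M : ℝ} (hM : 1 ≤ M)
    (hdet : ∀ n, (A n).det = 1) (hA : ∀ n, ‖A n‖ ≤ M)
    (hper : ∃ᶠ q : ℕ in atTop, ∀ n, ‖A (n + q) - A n‖ ≤ (4 * q * M ^ q)⁻¹)
    (hx : ∀ n, A n *ᵥ x n = x (n + 1)) (hx_lim : Tendsto x cofinite (𝓝 0)) : x = 0 := by
  funext n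
  have hgordon : ∃ᶠ q : ℕ in atTop,
      ‖x n‖ ≤ 2 * (‖x (n - q)‖ + ‖x (n + q)‖ + ‖x (n + q + q)‖) := by
    refine hper.mono fun q hq => ?_
    have hback := norm_orderedProd_shift_sub_le hM hA hq (n - q)
    rw [sub_add_cancel, norm_sub_rev] at hback
    have hx₀ := orderedProd_comp_add_mulVec hx (n - q) q
    rw [sub_add_cancel] at hx₀
    exact gordon_norm_le (det_orderedProd (fun j => hdet _) q)
      (det_orderedProd (fun j => hdet _) q) (norm_orderedProd_shift_sub_le hM hA hq n) hback
      hx₀ (orderedProd_comp_add_mulVec hx n q) (orderedProd_comp_add_mulVec hx (n + q) q)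
  have hlim : ∀ φ : ℕ → ℤ, φ.Injective → Tendsto (fun q => ‖x (φ q)‖) atTop (𝓝 0) :=
    fun φ hφ => by
      simpa [Nat.cofinite_eq_atTop] using (hx_lim.comp hφ.tendsto_cofinite).norm
  have hsum := (((hlim (fun q : ℕ => n - q) fun a b h => by simpa using h).add
    (hlim (fun q : ℕ => n + q) fun a b h => by simpa using h)).add
    (hlim (fun q : ℕ => n + q + q) fun a b h => by simp only at h; omega)).const_mul 2
  simp only [add_zero, mul_zero] at hsum
  exact norm_le_zero_iff.mp (ge_of_tendsto_of_frequently hsum hgordon)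

end Gordon

section Schrodinger

variable {𝕜 : Type*} [NormedField 𝕜]

def transferMatrix (a : 𝕜) : Matrix (Fin 2) (Fin 2) 𝕜 := !![a, -1; 1, 0]

theorem det_transferMatrix (a : 𝕜) : (transferMatrix a).det = 1 := by
  simp [transferMatrix, Matrix.det_fin_two]

theorem norm_transferMatrix_le (a : 𝕜) : ‖transferMatrix a‖ ≤ ‖a‖ + 1 := by
  simp [transferMatrix, Matrix.linfty_opNorm_fin_two, norm_nonneg]

theorem norm_transferMatrix_sub (a b : 𝕜) :
    ‖transferMatrix a - transferMatrix b‖ = ‖a - b‖ := by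
  simp [transferMatrix, Matrix.linfty_opNorm_fin_two]

theorem transferMatrix_mulVec (a s t : 𝕜) : transferMatrix a *ᵥ ![s, t] = ![a * s - t, s] := by
  ext i; fin_cases i <;> simp [transferMatrix, Matrix.mulVec, dotProduct, Fin.sum_univ_two]; ring

theorem eq_zero_of_frequently_almost_periodic_potential {W : ℤ → 𝕜} {E : 𝕜} {u : ℤ → 𝕜}
    (hu : ∀ n, -u (n + 1) - u (n - 1) + W n * u n = E * u n)
    (hu_lim : Tendsto u cofinite (𝓝 0)) {M : ℝ} (hM : 1 ≤ M) (hW : ∀ n, ‖W n - E‖ + 1 ≤ M)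
    (hper : ∃ᶠ q : ℕ in atTop, ∀ n, ‖W (n + q) - W n‖ ≤ (4 * q * M ^ q)⁻¹) : u = 0 := by
  have hstep : ∀ n, transferMatrix (W n - E) *ᵥ ![u n, u (n - 1)] = ![u (n + 1), u (n + 1 - 1)] := by
    intro n
    rw [transferMatrix_mulVec, add_sub_cancel_right]
    congr 2
    linear_combination hu n
  have hlim : Tendsto (fun n => ![u n, u (n - 1)]) cofinite (𝓝 0) := by
    refine tendsto_pi_nhds.2 fun i => ?_
    fin_cases i
    · exact hu_lim
    · exact hu_lim.comp (sub_left_injective (b := 1)).tendsto_cofinite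
  have hzero := eq_zero_of_frequently_almost_periodic hM (fun n => det_transferMatrix _)
    (fun n => (norm_transferMatrix_le _).trans (hW n))
    (hper.mono fun q hq n => by simpa [norm_transferMatrix_sub] using hq n) hstep hlim
  funext n
  simpa using congrFun (congrFun hzero n) 0

end Schrodinger

theorem Memℓp.tendsto_cofinite_zero {ι E : Type*} [NormedAddCommGroup E] {p : ENNReal}
    (hp : 0 < p.toReal) {u : ι → E} (hu : Memℓp u p) : Tendsto u cofinite (𝓝 0) := by
  rw [tendsto_zero_iff_norm_tendsto_zero]
  have h := (hu.summable hp).tendsto_cofinite_zero.rpow_const (p := p.toReal⁻¹)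
    (.inr (inv_nonneg.2 hp.le))
  simpa [Real.rpow_rpow_inv (norm_nonneg _) hp.ne', Real.zero_rpow (inv_ne_zero hp.ne')] using h

theorem frequently_distToInt_le_exp {ω c : ℝ} (h : (c : EReal) < betaExp ω) :
    ∃ᶠ q : ℕ in atTop, distToInt (q * ω) ≤ exp (-(c * q)) := by
  have hfreq := frequently_lt_of_lt_limsup (by isBoundedDefault) h
  refine (hfreq.and_eventually (eventually_gt_atTop 0)).mono fun q ⟨hq, hq0⟩ => ?_
  split_ifs at hq with hd
  · rw [hd]; positivity
  · have hd0 : 0 < distToInt (q * ω) := (abs_nonneg _).lt_of_ne' hd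
    have hlog : c < -log (distToInt (q * ω)) / q := EReal.coe_lt_coe_iff.mp hq
    rw [lt_div_iff₀ (by exact_mod_cast hq0)] at hlog
    exact (log_le_iff_le_exp hd0).mp (by linarith)

section Potential

variable {f : ℝ → ℝ} {K : ℝ}

theorem exp_mul_le_exp_of_abs_le_one (hK : 0 ≤ K) {t : ℝ} (ht : |t| ≤ 1) :
    exp (K * t) ≤ exp K :=
  exp_le_exp.2 <| by nlinarith [abs_le.1 ht]

theorem abs_exp_mul_sub_exp_mul_le {g : ℝ → ℝ} (hg : Differentiable ℝ g)
    (hg_bd : ∀ x, |g x| ≤ 1) (hg' : ∀ x, |deriv g x| ≤ 1) (hK : 0 ≤ K) (x y : ℝ) :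
    |exp (K * g x) - exp (K * g y)| ≤ K * exp K * |x - y| := by
  have hderiv : ∀ z, deriv (fun t => exp (K * g t)) z = exp (K * g z) * (K * deriv g z) :=
    fun z => (((hg z).hasDerivAt.const_mul K).exp).deriv
  have hbound : ∀ z ∈ Set.univ, ‖deriv (fun t => exp (K * g t)) z‖ ≤ K * exp K := by
    intro z _
    rw [hderiv, Real.norm_eq_abs, abs_mul, abs_mul, abs_of_pos (exp_pos _), abs_of_nonneg hK]
    calc exp (K * g z) * (K * |deriv g z|) ≤ exp K * (K * 1) := by
          gcongr ?_ * (_ * ?_)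
          exacts [exp_mul_le_exp_of_abs_le_one hK (hg_bd z), hg' z]
      _ = K * exp K := by ring
  simpa [Real.norm_eq_abs] using Convex.norm_image_sub_le_of_norm_deriv_le
    (fun z _ => ((hg z).const_mul K).exp) hbound convex_univ (Set.mem_univ y) (Set.mem_univ x)

theorem abs_pot_le (hf_bd : ∀ x, |f x| ≤ 1) (hK : 0 ≤ K) (ω x : ℝ) :
    |pot f K ω x| ≤ 2 * exp K := by
  have h₁ := exp_mul_le_exp_of_abs_le_one hK (hf_bd (x + ω))
  have h₂ := exp_mul_le_exp_of_abs_le_one hK (t := -f x) (by simpa using hf_bd x)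
  rw [pot, abs_of_pos (by positivity), ← mul_neg]
  linarith

theorem pot_add_intCast (hf_per : ∀ x, f (x + 1) = f x) (ω x : ℝ) (m : ℤ) :
    pot f K ω (x + m) = pot f K ω x := by
  have hper : ∀ y, f (y + m) = f y := by simpa using Function.Periodic.int_mul hf_per m
  rw [pot, pot, add_right_comm, hper, hper]

theorem abs_pot_sub_le (hf : Differentiable ℝ f) (hf_bd : ∀ x, |f x| ≤ 1)
    (hf_bd' : ∀ x, |deriv f x| ≤ 1) (hK : 0 ≤ K) (ω x y : ℝ) :
    |pot f K ω x - pot f K ω y| ≤ 2 * K * exp K * |x - y| := by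
  have h₁ := abs_exp_mul_sub_exp_mul_le (g := fun t => f (t + ω)) (hf.comp (by fun_prop))
    (fun t => hf_bd _) (fun t => by simpa [deriv_comp_add_const] using hf_bd' _) hK x y
  have h₂ := abs_exp_mul_sub_exp_mul_le (g := fun t => -f t) hf.neg
    (fun t => by simpa using hf_bd t) (fun t => by simpa [deriv.fun_neg] using hf_bd' t) hK x y
  simp only [mul_neg] at h₂
  calc |pot f K ω x - pot f K ω y|
      = |(exp (K * f (x + ω)) - exp (K * f (y + ω))) + (exp (-(K * f x)) - exp (-(K * f y)))| := by
        rw [pot, pot]; ring_nf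
    _ ≤ 2 * K * exp K * |x - y| := (abs_add_le _ _).trans (by linarith)

theorem abs_pot_add_sub_le (hf_per : ∀ x, f (x + 1) = f x) (hf : Differentiable ℝ f)
    (hf_bd : ∀ x, |f x| ≤ 1) (hf_bd' : ∀ x, |deriv f x| ≤ 1) (hK : 0 ≤ K) (ω x s : ℝ) :
    |pot f K ω (x + s) - pot f K ω x| ≤ 2 * K * exp K * distToInt s := by
  have h := abs_pot_sub_le hf hf_bd hf_bd' hK ω (x + (s - round s)) x
  rwa [← pot_add_intCast hf_per ω _ (round s), add_sub_cancel_left, add_assoc,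
    sub_add_cancel] at h

theorem six_mul_exp_add_one_le_exp_three_mul {K : ℝ} (hK : 1 ≤ K) :
    6 * exp K + 1 ≤ exp (3 * K) := by
  have h7 : 7 ≤ exp (2 * K) := calc
    (7 : ℝ) ≤ exp 1 * exp 1 := by nlinarith [exp_one_gt_d9]
    _ = exp 2 := by rw [← exp_add]; norm_num
    _ ≤ exp (2 * K) := exp_le_exp.2 (by linarith)
  have h1 : 1 ≤ exp K := one_le_exp (by linarith)
  rw [show 3 * K = K + 2 * K by ring, exp_add]
  nlinarith

theorem two_mul_mul_exp_mul_exp_neg_le {K : ℝ} (hK : 1 ≤ K) {q : ℕ} (hq : 1 ≤ q) :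
    2 * K * exp K * exp (-(40 * K * q)) ≤ (4 * q * exp (3 * K) ^ q)⁻¹ := by
  have hq' : (1 : ℝ) ≤ q := by exact_mod_cast hq
  have h8K : 8 * K ≤ exp (8 * K) := by linarith [add_one_le_exp (8 * K)]
  have hqK : (q : ℝ) ≤ exp (K * q) := by nlinarith [add_one_le_exp (K * q)]
  rw [← one_div, le_div_iff₀ (by positivity), ← exp_nat_mul]
  calc 2 * K * exp K * exp (-(40 * K * q)) * (4 * q * exp (q * (3 * K)))
      = 8 * K * q * exp (K + -(40 * K * q) + q * (3 * K)) := by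
        rw [exp_add, exp_add]; ring
    _ ≤ exp (8 * K) * exp (K * q) * exp (K + -(40 * K * q) + q * (3 * K)) := by gcongr
    _ = exp (9 * K - 36 * K * q) := by rw [← exp_add, ← exp_add]; ring_nf
    _ ≤ 1 := exp_le_one_iff.mpr (by nlinarith)

theorem frequently_abs_pot_add_mul_sub_le (hf_per : ∀ x, f (x + 1) = f x)
    (hf : Differentiable ℝ f) (hf_bd : ∀ x, |f x| ≤ 1) (hf_bd' : ∀ x, |deriv f x| ≤ 1)
    (hK : 1 ≤ K) {ω : ℝ} (hβ : ((40 * K : ℝ) : EReal) < betaExp ω) :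
    ∃ᶠ q : ℕ in atTop, ∀ x,
      |pot f K ω (x + q * ω) - pot f K ω x| ≤ (4 * q * exp (3 * K) ^ q)⁻¹ := by
  refine ((frequently_distToInt_le_exp hβ).and_eventually (eventually_ge_atTop 1)).mono
    fun q ⟨hq, hq1⟩ x => ?_
  calc _ ≤ 2 * K * exp K * distToInt (q * ω) :=
        abs_pot_add_sub_le hf_per hf hf_bd hf_bd' (by linarith) ω x _
    _ ≤ 2 * K * exp K * exp (-(40 * K * q)) := by gcongr
    _ ≤ _ := two_mul_mul_exp_mul_exp_neg_le hK hq1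

end Potential

theorem statement9_general (f : ℝ → ℝ) (hf_per : ∀ x : ℝ, f (x + 1) = f x)
    (hf_C1 : ContDiff ℝ 1 f) (hf_bd : ∀ x : ℝ, |f x| ≤ 1)
    (hf_bd' : ∀ x : ℝ, |deriv f x| ≤ 1)
    (K : ℝ) (hK : 1 ≤ K) (ω : ℝ)
    (hβ : ((40 * K : ℝ) : EReal) < betaExp ω) :
    ∀ θ E : ℝ, |E| ≤ 4 * Real.exp K →
      (∀ u : lp (fun _ : ℤ => ℂ) 2,
        (∀ n : ℤ, -u (n + 1) - u (n - 1) + (pot f K ω (θ + n * ω) : ℂ) * u n = (E : ℂ) * u n) →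
        u = 0) ∧
      (∀ H : lp (fun _ : ℤ => ℂ) 2 →L[ℂ] lp (fun _ : ℤ => ℂ) 2,
        (∀ (u : lp (fun _ : ℤ => ℂ) 2) (n : ℤ),
          H u n = -u (n + 1) - u (n - 1) + (pot f K ω (θ + n * ω) : ℂ) * u n) →
        ∀ u : lp (fun _ : ℤ => ℂ) 2, H u = (E : ℂ) • u → u = 0) := by
  intro θ E hE
  have hK0 : 0 ≤ K := by linarith
  have hM := six_mul_exp_add_one_le_exp_three_mul hK
  have hW : ∀ n : ℤ, ‖(pot f K ω (θ + n * ω) : ℂ) - E‖ + 1 ≤ exp (3 * K) := fun n => by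
    have h₁ := abs_pot_le hf_bd hK0 ω (θ + n * ω)
    have h₂ := norm_sub_le (pot f K ω (θ + n * ω) : ℂ) (E : ℂ)
    simp only [Complex.norm_real, Real.norm_eq_abs] at h₂
    linarith
  have hper : ∃ᶠ q : ℕ in atTop, ∀ n : ℤ, ‖(pot f K ω (θ + ↑(n + q) * ω) : ℂ) -
      pot f K ω (θ + n * ω)‖ ≤ (4 * q * exp (3 * K) ^ q)⁻¹ :=
    (frequently_abs_pot_add_mul_sub_le hf_per (hf_C1.differentiable one_ne_zero) hf_bd hf_bd'
      hK hβ).mono fun q hq n => by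
        rw [← Complex.ofReal_sub, Complex.norm_real, Real.norm_eq_abs]
        simpa [add_mul, add_assoc] using hq (θ + n * ω)
  have key : ∀ u : lp (fun _ : ℤ => ℂ) 2,
      (∀ n : ℤ, -u (n + 1) - u (n - 1) + (pot f K ω (θ + n * ω) : ℂ) * u n = (E : ℂ) * u n) →
      u = 0 := fun u hu => lp.ext <| eq_zero_of_frequently_almost_periodic_potential hu
    ((lp.memℓp u).tendsto_cofinite_zero (by norm_num)) (hM.trans' (by linarith [exp_pos K]))
    hW hper
  refine ⟨key, fun H hH u hu => key u fun n => ?_⟩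
  rw [← hH, hu, lp.coeFn_smul, Pi.smul_apply, smul_eq_mul]

/-- Gordon-type absence of point spectrum: if `f` is 1-periodic and `C¹` with
`max(sup|f|, sup|f'|) ≤ 1`, `K ≥ 1`, and `ω` is irrational with `β(ω) > 40K`, then for
every `θ` and every `|E| ≤ 4 e^K` there is no nonzero `ℓ²(ℤ)` solution of
`-u_{n+1} - u_{n-1} + V(θ+nω) u_n = E u_n`; in particular `H_{K,θ,ω}` has no eigenvalues
in `[-4e^K, 4e^K]`. -/
theorem statement9 (f : ℝ → ℝ) (hf_per : ∀ x : ℝ, f (x + 1) = f x)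
    (hf_C1 : ContDiff ℝ 1 f) (hf_bd : ∀ x : ℝ, |f x| ≤ 1)
    (hf_bd' : ∀ x : ℝ, |deriv f x| ≤ 1)
    (K : ℝ) (hK : 1 ≤ K) (ω : ℝ) (hω : Irrational ω)
    (hβ : ((40 * K : ℝ) : EReal) < betaExp ω) :
    ∀ θ E : ℝ, |E| ≤ 4 * Real.exp K →
      (∀ u : lp (fun _ : ℤ => ℂ) 2,
        (∀ n : ℤ, -u (n + 1) - u (n - 1) + (pot f K ω (θ + n * ω) : ℂ) * u n = (E : ℂ) * u n) →
        u = 0) ∧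
      (∀ H : lp (fun _ : ℤ => ℂ) 2 →L[ℂ] lp (fun _ : ℤ => ℂ) 2,
        (∀ (u : lp (fun _ : ℤ => ℂ) 2) (n : ℤ),
          H u n = -u (n + 1) - u (n - 1) + (pot f K ω (θ + n * ω) : ℂ) * u n) →
        ∀ u : lp (fun _ : ℤ => ℂ) 2, H u = (E : ℂ) • u → u = 0) :=
  statement9_general f hf_per hf_C1 hf_bd hf_bd' K hK ω hβ
end

section
/- For every β₀ ∈ [0, ∞] (extended reals), the level set Ω_{β₀} = {ω ∈ ℝ : β(ω) = β₀} is dense in ℝ. -/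
/-!
For finite `β₀ = b log 2` take `ω = c / 2^{a₀} + ∑_{k ≥ 1} 2^{-a_k}` with exponents growing like
`a_{k+1} ≈ b · 2^{a_k}`. Then `‖2^{a_k} ω‖ ≈ 2^{a_k - a_{k+1}}`, which gives `β(ω) ≥ β₀`, while for
`2^{a_k} ≤ n < 2^{a_{k+1}}` the multiple `n ω` is close to `n p / 2^{a_{k+1}}` with `p` odd, so
`‖n ω‖ ≳ 2^{-a_{k+1}}`, which gives `β(ω) ≤ β₀`. Choosing `c / 2^{a₀}` near a given point makes
these numbers dense. For `β₀ = ∞` the rationals do the job.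
-/

open Real Filter

lemma distToInt_le_abs_sub (x : ℝ) (z : ℤ) : distToInt x ≤ |x - z| := round_le x z

lemma distToInt_intCast (z : ℤ) : distToInt z = 0 := by simp [distToInt]

lemma distToInt_sub_abs_le (x h : ℝ) : distToInt x - |h| ≤ distToInt (x + h) :=
  calc distToInt x - |h| ≤ |x - round (x + h)| - |h| := by
        gcongr; exact distToInt_le_abs_sub x _
    _ = |(x + h - round (x + h)) - h| - |h| := by ring_nf
    _ ≤ |x + h - round (x + h)| := by linarith [abs_sub (x + h - round (x + h)) h]

lemma one_div_le_distToInt_intCast_div {q : ℕ} (hq : 0 < q) {z : ℤ} (hz : ¬ (q : ℤ) ∣ z) :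
    1 / (q : ℝ) ≤ distToInt (z / q) := by
  have hq' : (0 : ℝ) < q := by exact_mod_cast hq
  have hne : z - q * round ((z : ℝ) / q) ≠ 0 := fun h => hz ⟨_, sub_eq_zero.mp h⟩
  have hnum : (1 : ℝ) ≤ |(z : ℝ) - q * round ((z : ℝ) / q)| := by
    exact_mod_cast Int.one_le_abs hne
  rw [distToInt, show (z : ℝ) / q - round ((z : ℝ) / q) = (z - q * round ((z : ℝ) / q)) / q by
    field_simp, abs_div, abs_of_pos hq']
  gcongr

lemma inv_two_pow_le_distToInt_of_odd {p : ℤ} (hp : Odd p) {A n : ℕ} (hn0 : 0 < n)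
    (hnA : n < 2 ^ A) : (2⁻¹ : ℝ) ^ A ≤ distToInt (n * p * 2⁻¹ ^ A) := by
  have hndvd : ¬ ((2 ^ A : ℕ) : ℤ) ∣ n * p := by
    intro h
    have hcop : IsCoprime ((2 : ℤ) ^ A) p :=
      (Int.prime_two.coprime_iff_not_dvd.mpr
        (by rwa [← even_iff_two_dvd, Int.not_even_iff_odd])).pow_left
    have h2A : (2 : ℤ) ^ A ∣ n := hcop.dvd_of_dvd_mul_right (by exact_mod_cast h)
    have : ((2 ^ A : ℕ) : ℤ) ≤ n := by exact_mod_cast Int.le_of_dvd (by omega) h2A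
    omega
  have := one_div_le_distToInt_intCast_div (Nat.two_pow_pos A) hndvd
  push_cast at this
  simpa [div_eq_mul_inv, inv_pow] using this

noncomputable def betaTerm (ω : ℝ) (n : ℕ) : EReal :=
  if distToInt (n * ω) = 0 then ⊤ else ((-log (distToInt (n * ω)) / n : ℝ) : EReal)

lemma betaExp_eq_limsup_betaTerm (ω : ℝ) : betaExp ω = limsup (betaTerm ω) atTop := rfl

lemma betaTerm_of_pos {ω : ℝ} {n : ℕ} (h : 0 < distToInt (n * ω)) :
    betaTerm ω n = ((-log (distToInt (n * ω)) / n : ℝ) : EReal) :=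
  if_neg h.ne'

lemma betaExp_ratCast (q : ℚ) : betaExp q = ⊤ := by
  rw [betaExp_eq_limsup_betaTerm]
  refine top_le_iff.mp
    (le_limsup_of_frequently_le (frequently_atTop.mpr fun N => ?_) (by isBoundedDefault))
  refine ⟨q.den * N, Nat.le_mul_of_pos_left N q.den_pos, ?_⟩
  have hint : ((q.den * N : ℕ) : ℝ) * q = ((q.num * N : ℤ) : ℝ) := by
    push_cast
    rw [mul_right_comm, ← Rat.cast_natCast, ← Rat.cast_mul, Rat.den_mul_eq_num]
    push_cast
    ring
  rw [betaTerm, hint, distToInt_intCast, if_pos rfl]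

lemma neg_log_le_of_inv_two_pow_le {d : ℝ} {A : ℕ} (h : (2⁻¹ : ℝ) ^ A ≤ d) :
    -log d ≤ A * log 2 := by
  have := Real.log_le_log (by positivity) h
  rw [Real.log_pow, Real.log_inv] at this
  linarith

lemma mul_log_two_le_neg_log {d : ℝ} {A : ℕ} (hd : 0 < d) (h : d ≤ (2⁻¹ : ℝ) ^ A) :
    A * log 2 ≤ -log d := by
  have := Real.log_le_log hd h
  rw [Real.log_pow, Real.log_inv] at this
  linarith

noncomputable def dyadicTail (a : ℕ → ℕ) (k : ℕ) : ℝ := ∑' j, (2⁻¹ : ℝ) ^ a (k + 1 + j)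

noncomputable def lacunaryDyadic (c : ℤ) (a : ℕ → ℕ) : ℝ := c * (2⁻¹ : ℝ) ^ a 0 + dyadicTail a 0

section StrictMono

variable {a : ℕ → ℕ}

lemma inv_two_pow_apply_add_le (ha : StrictMono a) (k j : ℕ) :
    (2⁻¹ : ℝ) ^ a (k + j) ≤ 2⁻¹ ^ a k * 2⁻¹ ^ j := by
  rw [← pow_add, add_comm (a k)]
  exact pow_le_pow_of_le_one (by norm_num) (by norm_num)
    (ha.add_le_nat j k |>.trans (by rw [add_comm]))

lemma summable_inv_two_pow_apply_add (ha : StrictMono a) (k : ℕ) :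
    Summable fun j => (2⁻¹ : ℝ) ^ a (k + j) :=
  .of_nonneg_of_le (fun _ => by positivity) (inv_two_pow_apply_add_le ha k)
    ((summable_geometric_of_lt_one (by norm_num) (by norm_num)).mul_left _)

lemma dyadicTail_eq_add (ha : StrictMono a) (k : ℕ) :
    dyadicTail a k = 2⁻¹ ^ a (k + 1) + dyadicTail a (k + 1) := by
  rw [dyadicTail, (summable_inv_two_pow_apply_add ha (k + 1)).tsum_eq_zero_add, dyadicTail]
  exact congrArg _ (tsum_congr fun j => by congr 2; omega)

lemma inv_two_pow_le_dyadicTail (ha : StrictMono a) (k : ℕ) :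
    (2⁻¹ : ℝ) ^ a (k + 1) ≤ dyadicTail a k :=
  (summable_inv_two_pow_apply_add ha (k + 1)).le_tsum 0 (fun _ _ => by positivity)

lemma dyadicTail_pos (ha : StrictMono a) (k : ℕ) : 0 < dyadicTail a k :=
  lt_of_lt_of_le (by positivity) (inv_two_pow_le_dyadicTail ha k)

lemma dyadicTail_le (ha : StrictMono a) (k : ℕ) : dyadicTail a k ≤ 2 * 2⁻¹ ^ a (k + 1) :=
  calc dyadicTail a k ≤ ∑' j, (2⁻¹ : ℝ) ^ a (k + 1) * 2⁻¹ ^ j :=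
        (summable_inv_two_pow_apply_add ha (k + 1)).tsum_le_tsum
          (inv_two_pow_apply_add_le ha (k + 1))
          ((summable_geometric_of_lt_one (by norm_num) (by norm_num)).mul_left _)
    _ = 2 * 2⁻¹ ^ a (k + 1) := by rw [tsum_mul_left, tsum_geometric_inv_two, mul_comm]

lemma intCast_mul_add_dyadicTail (ha : StrictMono a) (p : ℤ) (k : ℕ) :
    p * (2⁻¹ : ℝ) ^ a k + dyadicTail a k =
      ((p * 2 ^ (a (k + 1) - a k) + 1 : ℤ) : ℝ) * 2⁻¹ ^ a (k + 1) + dyadicTail a (k + 1) := by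
  obtain ⟨d, hd⟩ := Nat.exists_eq_add_of_lt (ha (Nat.lt_succ_self k))
  rw [dyadicTail_eq_add ha, hd, show a k + d + 1 - a k = d + 1 by omega]
  push_cast
  simp only [inv_pow]
  field_simp
  ring

lemma exists_lacunaryDyadic_eq (ha : StrictMono a) (c : ℤ) (k : ℕ) :
    ∃ p : ℤ, lacunaryDyadic c a = p * 2⁻¹ ^ a k + dyadicTail a k := by
  induction k with
  | zero => exact ⟨c, rfl⟩
  | succ k ih =>
    obtain ⟨p, hp⟩ := ih
    exact ⟨_, hp.trans (intCast_mul_add_dyadicTail ha p k)⟩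

lemma exists_odd_lacunaryDyadic_eq (ha : StrictMono a) (c : ℤ) (k : ℕ) :
    ∃ p : ℤ, Odd p ∧ lacunaryDyadic c a = p * 2⁻¹ ^ a (k + 1) + dyadicTail a (k + 1) := by
  obtain ⟨p, hp⟩ := exists_lacunaryDyadic_eq ha c k
  refine ⟨_, ?_, hp.trans (intCast_mul_add_dyadicTail ha p k)⟩
  have : a k < a (k + 1) := ha (Nat.lt_succ_self k)
  exact Even.add_one ((even_two.pow_of_ne_zero (by omega)).mul_left p)

lemma distToInt_two_pow_mul_lacunaryDyadic_le (ha : StrictMono a) (c : ℤ) (k : ℕ) :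
    distToInt (2 ^ a k * lacunaryDyadic c a) ≤ 2⁻¹ ^ (a (k + 1) - (a k + 1)) := by
  obtain ⟨p, hp⟩ := exists_lacunaryDyadic_eq ha c k
  have hpow : (2 : ℝ) ^ a k * 2⁻¹ ^ a k = 1 := by rw [← mul_pow]; norm_num
  obtain ⟨d, hd⟩ := Nat.exists_eq_add_of_le (ha (Nat.lt_succ_self k))
  calc distToInt (2 ^ a k * lacunaryDyadic c a) ≤ |2 ^ a k * lacunaryDyadic c a - p| :=
        distToInt_le_abs_sub _ p
    _ = 2 ^ a k * dyadicTail a k := by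
        rw [hp, mul_add, ← mul_assoc, mul_comm _ (p : ℝ), mul_assoc, hpow, mul_one,
          add_sub_cancel_left, abs_of_pos (by positivity [dyadicTail_pos ha k])]
    _ ≤ 2 ^ a k * (2 * 2⁻¹ ^ a (k + 1)) := by gcongr; exact dyadicTail_le ha k
    _ = 2⁻¹ ^ (a (k + 1) - (a k + 1)) := by
        rw [hd, show a k + 1 + d - (a k + 1) = d by omega]
        simp only [inv_pow]
        field_simp
        rw [pow_add, pow_succ]

lemma abs_lacunaryDyadic_sub_le (ha : StrictMono a) (c : ℤ) :
    |lacunaryDyadic c a - c * 2⁻¹ ^ a 0| ≤ 2⁻¹ ^ a 0 := by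
  rw [lacunaryDyadic, add_sub_cancel_left, abs_of_pos (dyadicTail_pos ha 0)]
  calc dyadicTail a 0 ≤ 2 * 2⁻¹ ^ a 1 := dyadicTail_le ha 0
    _ ≤ 2 * 2⁻¹ ^ (a 0 + 1) :=
        mul_le_mul_of_nonneg_left
          (pow_le_pow_of_le_one (by norm_num) (by norm_num) (ha zero_lt_one)) zero_le_two
    _ = 2⁻¹ ^ a 0 := by rw [pow_succ]; ring

end StrictMono

section Gap

variable {a : ℕ → ℕ}

lemma strictMono_of_gap (ha : ∀ k, 2 * a k + 2 ≤ a (k + 1)) : StrictMono a :=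
  strictMono_nat_of_lt_succ fun k => by have := ha k; omega

/-- With `A = a_{k+1}`, `n ω` lies within `n · 2^{-a_{k+2}} ≤ 2^{-A-1}` of `n p / 2^A`, `p` odd. -/
lemma inv_two_pow_le_distToInt_mul_lacunaryDyadic (ha : ∀ k, 2 * a k + 2 ≤ a (k + 1)) (c : ℤ)
    (k : ℕ) {n : ℕ} (hn0 : 0 < n) (hn : n < 2 ^ a (k + 1)) :
    (2⁻¹ : ℝ) ^ (a (k + 1) + 1) ≤ distToInt (n * lacunaryDyadic c a) := by
  have hmono := strictMono_of_gap ha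
  obtain ⟨p, hp, hω⟩ := exists_odd_lacunaryDyadic_eq hmono c k
  set A := a (k + 1)
  have hnA : (n : ℝ) ≤ 2 ^ A := by exact_mod_cast hn.le
  have hsmall : n * dyadicTail a (k + 1) ≤ (2⁻¹ : ℝ) ^ (A + 1) :=
    calc n * dyadicTail a (k + 1) ≤ 2 ^ A * (2 * 2⁻¹ ^ (2 * A + 2)) := by
          refine mul_le_mul hnA ((dyadicTail_le hmono (k + 1)).trans ?_)
            (dyadicTail_pos hmono (k + 1)).le (by positivity)
          exact mul_le_mul_of_nonneg_left
            (pow_le_pow_of_le_one (by norm_num) (by norm_num) (ha (k + 1))) zero_le_two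
      _ = 2⁻¹ ^ (A + 1) := by
          simp only [inv_pow]
          field_simp
          ring
  calc (2⁻¹ : ℝ) ^ (A + 1) = 2⁻¹ ^ A - 2⁻¹ ^ (A + 1) := by ring
    _ ≤ distToInt (n * p * 2⁻¹ ^ A) - |n * dyadicTail a (k + 1)| := by
        rw [abs_of_nonneg (mul_nonneg n.cast_nonneg (dyadicTail_pos hmono (k + 1)).le)]
        gcongr
        exact inv_two_pow_le_distToInt_of_odd hp hn0 hn
    _ ≤ distToInt (n * lacunaryDyadic c a) := by
        convert distToInt_sub_abs_le _ _ using 2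
        rw [hω]
        ring

lemma le_betaTerm_two_pow (ha : ∀ k, 2 * a k + 2 ≤ a (k + 1)) (c : ℤ) (k : ℕ) :
    (((a (k + 1) - (a k + 1) : ℕ) * log 2 * 2⁻¹ ^ a k : ℝ) : EReal) ≤
      betaTerm (lacunaryDyadic c a) (2 ^ a k) := by
  have hlt : 2 ^ a k < 2 ^ a (k + 1) :=
    Nat.pow_lt_pow_right one_lt_two (strictMono_of_gap ha k.lt_succ_self)
  have hpos := (inv_two_pow_le_distToInt_mul_lacunaryDyadic ha c k (Nat.two_pow_pos _) hlt
    ).trans_lt' (by positivity)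
  rw [betaTerm_of_pos hpos, EReal.coe_le_coe_iff, div_eq_mul_inv]
  push_cast at hpos ⊢
  rw [← inv_pow]
  gcongr
  exact mul_log_two_le_neg_log hpos
    (distToInt_two_pow_mul_lacunaryDyadic_le (strictMono_of_gap ha) c k)

lemma betaTerm_le (ha : ∀ k, 2 * a k + 2 ≤ a (k + 1)) (c : ℤ) {k n : ℕ} (hkn : 2 ^ a k ≤ n)
    (hnk : n < 2 ^ a (k + 1)) :
    betaTerm (lacunaryDyadic c a) n ≤ (((a (k + 1) + 1 : ℕ) * log 2 * 2⁻¹ ^ a k : ℝ) : EReal) := by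
  have hd :=
    inv_two_pow_le_distToInt_mul_lacunaryDyadic ha c k ((Nat.two_pow_pos _).trans_le hkn) hnk
  rw [betaTerm_of_pos (hd.trans_lt' (by positivity)), EReal.coe_le_coe_iff, inv_pow,
    ← div_eq_mul_inv]
  exact div_le_div₀ (by positivity) (neg_log_le_of_inv_two_pow_le hd) (by positivity)
    (by exact_mod_cast hkn)

end Gap

/-- With `b = β₀ / log 2`, the gap `a_{k+1} - a_k ≈ b · 2^{a_k}` makes
`‖2^{a_k} ω‖ ≈ exp (-β₀ · 2^{a_k})`; the extra `2 a_k + 2` keeps the gaps lacunary. -/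
noncomputable def lacunarySeq (b : ℝ) (m : ℕ) : ℕ → ℕ
  | 0 => m
  | k + 1 => ⌈b * 2 ^ lacunarySeq b m k⌉₊ + 2 * lacunarySeq b m k + 2

lemma lacunarySeq_gap (b : ℝ) (m k : ℕ) :
    2 * lacunarySeq b m k + 2 ≤ lacunarySeq b m (k + 1) := by
  rw [lacunarySeq]; omega

lemma tendsto_two_mul_add_four_mul_inv_two_pow :
    Tendsto (fun x : ℕ => (2 * x + 4) * (2⁻¹ : ℝ) ^ x) atTop (nhds 0) := by
  have h1 := tendsto_self_mul_const_pow_of_lt_one (r := (2⁻¹ : ℝ)) (by norm_num) (by norm_num)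
  have h2 := tendsto_pow_atTop_nhds_zero_of_lt_one (r := (2⁻¹ : ℝ)) (by norm_num) (by norm_num)
  simpa [add_mul, mul_assoc] using (h1.const_mul 2).add (h2.const_mul 4)

lemma le_betaExp_lacunaryDyadic (b : ℝ) (c : ℤ) (m : ℕ) :
    ((b * log 2 : ℝ) : EReal) ≤ betaExp (lacunaryDyadic c (lacunarySeq b m)) := by
  set a := lacunarySeq b m
  rw [betaExp_eq_limsup_betaTerm]
  refine le_limsup_of_frequently_le (frequently_atTop.mpr fun N => ⟨2 ^ a N, ?_, ?_⟩)
    (by isBoundedDefault)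
  · exact ((strictMono_of_gap (lacunarySeq_gap b m)).le_apply).trans Nat.lt_two_pow_self.le
  refine le_trans ?_ (le_betaTerm_two_pow (lacunarySeq_gap b m) c N)
  rw [EReal.coe_le_coe_iff]
  have hgap : b * 2 ^ a N ≤ (a (N + 1) - (a N + 1) : ℕ) := by
    have : a (N + 1) - (a N + 1) = ⌈b * 2 ^ a N⌉₊ + a N + 1 := by
      simp only [a, lacunarySeq]; omega
    rw [this]
    push_cast
    linarith [Nat.le_ceil (b * 2 ^ a N), (a N).cast_nonneg (α := ℝ)]
  calc b * log 2 = b * 2 ^ a N * log 2 * 2⁻¹ ^ a N := by rw [inv_pow]; field_simp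
    _ ≤ _ := by gcongr

lemma betaExp_lacunaryDyadic_le {b : ℝ} (hb : 0 ≤ b) (c : ℤ) (m : ℕ) :
    betaExp (lacunaryDyadic c (lacunarySeq b m)) ≤ ((b * log 2 : ℝ) : EReal) := by
  set a := lacunarySeq b m
  have ha := strictMono_of_gap (lacunarySeq_gap b m)
  refine EReal.le_of_forall_lt_iff_le.mp fun z hz => ?_
  have hz : b * log 2 < z := by exact_mod_cast hz
  obtain ⟨K, hK⟩ := eventually_atTop.mp <|
    ((tendsto_two_mul_add_four_mul_inv_two_pow.comp ha.tendsto_atTop).mul_const (log 2)).eventually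
      (gt_mem_nhds (show (0 * log 2 : ℝ) < z - b * log 2 by linarith))
  rw [betaExp_eq_limsup_betaTerm]
  refine limsup_le_of_le (by isBoundedDefault) (eventually_atTop.mpr ⟨2 ^ a K, fun n hn => ?_⟩)
  have h2a : StrictMono fun k => 2 ^ a k := (pow_right_strictMono₀ one_lt_two).comp ha
  obtain ⟨k, hkn, hnk⟩ := h2a.exists_between_of_tendsto_atTop h2a.tendsto_atTop
    (x := n + 1) (by simpa [Nat.lt_succ_iff] using (h2a.monotone (Nat.zero_le K)).trans hn)
  have hKk : K ≤ k := by
    by_contra! h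
    have : 2 ^ a (k + 1) ≤ 2 ^ a K := h2a.monotone h
    omega
  refine (betaTerm_le (lacunarySeq_gap b m) c (Nat.lt_succ_iff.mp hkn) hnk).trans ?_
  rw [EReal.coe_le_coe_iff]
  have hceil : (a (k + 1) + 1 : ℕ) ≤ b * 2 ^ a k + (2 * a k + 4) := by
    have : a (k + 1) + 1 = ⌈b * 2 ^ a k⌉₊ + 2 * a k + 3 := by simp only [a, lacunarySeq]
    rw [this]
    push_cast
    linarith [Nat.ceil_lt_add_one (by positivity : 0 ≤ b * 2 ^ a k)]
  calc ((a (k + 1) + 1 : ℕ) : ℝ) * log 2 * 2⁻¹ ^ a k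
      ≤ (b * 2 ^ a k + (2 * a k + 4)) * log 2 * 2⁻¹ ^ a k := by gcongr
    _ = b * log 2 + (2 * a k + 4) * 2⁻¹ ^ a k * log 2 := by rw [inv_pow]; field_simp
    _ ≤ z := by
        linarith [show (2 * a k + 4) * 2⁻¹ ^ a k * log 2 < z - b * log 2 from hK k hKk]

lemma betaExp_lacunaryDyadic {b : ℝ} (hb : 0 ≤ b) (c : ℤ) (m : ℕ) :
    betaExp (lacunaryDyadic c (lacunarySeq b m)) = ((b * log 2 : ℝ) : EReal) :=
  (betaExp_lacunaryDyadic_le hb c m).antisymm (le_betaExp_lacunaryDyadic b c m)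

lemma abs_round_mul_two_pow_mul_sub_le (x : ℝ) (m : ℕ) :
    |round (x * 2 ^ m) * (2⁻¹ : ℝ) ^ m - x| ≤ 2⁻¹ ^ m := by
  have hpow : (2 : ℝ) ^ m * 2⁻¹ ^ m = 1 := by rw [← mul_pow]; norm_num
  calc |round (x * 2 ^ m) * (2⁻¹ : ℝ) ^ m - x| = |x * 2 ^ m - round (x * 2 ^ m)| * 2⁻¹ ^ m := by
        rw [show round (x * 2 ^ m) * (2⁻¹ : ℝ) ^ m - x
            = -((x * 2 ^ m - round (x * 2 ^ m)) * 2⁻¹ ^ m) by linear_combination x * hpow,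
          abs_neg, abs_mul, abs_of_pos (by positivity : (0 : ℝ) < 2⁻¹ ^ m)]
    _ ≤ 1 * 2⁻¹ ^ m := by gcongr; exact (abs_sub_round _).trans (by norm_num)
    _ = 2⁻¹ ^ m := one_mul _

lemma dense_setOf_betaExp_eq_coe {B : ℝ} (hB : 0 ≤ B) : Dense {ω | betaExp ω = B} := by
  refine Metric.dense_iff.mpr fun x r hr => ?_
  obtain ⟨m, hm⟩ := exists_pow_lt_of_lt_one (half_pos hr) (by norm_num : (2⁻¹ : ℝ) < 1)
  set a := lacunarySeq (B / log 2) m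
  set c := round (x * 2 ^ m)
  refine ⟨lacunaryDyadic c a, ?_, ?_⟩
  · calc dist (lacunaryDyadic c a) x
        ≤ |lacunaryDyadic c a - c * 2⁻¹ ^ m| + |c * (2⁻¹ : ℝ) ^ m - x| := abs_sub_le _ _ _
      _ ≤ 2⁻¹ ^ m + 2⁻¹ ^ m :=
          add_le_add (abs_lacunaryDyadic_sub_le (strictMono_of_gap (lacunarySeq_gap _ m)) c)
            (abs_round_mul_two_pow_mul_sub_le x m)
      _ < r := by linarith
  · show betaExp _ = _
    rw [betaExp_lacunaryDyadic (div_nonneg hB (log_nonneg one_le_two)),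
      div_mul_cancel₀ B (log_pos one_lt_two).ne']

/-- For every `β₀ ∈ [0,∞]` (extended reals), the level set `{ω : β(ω) = β₀}` is dense in `ℝ`. -/
theorem statement10 (β₀ : EReal) (hβ₀ : 0 ≤ β₀) :
    Dense {ω : ℝ | betaExp ω = β₀} := by
  induction β₀ using EReal.rec with
  | bot => exact absurd hβ₀ (by simp)
  | top => exact Rat.denseRange_cast.mono (Set.range_subset_iff.mpr betaExp_ratCast)
  | coe B => exact dense_setOf_betaExp_eq_coe (EReal.coe_nonneg.mp hβ₀)
end
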